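/- arXiv:1910.02573 — 4 statements merged into one kernel-verified Lean document; each statement's English description precedes it below -/
import Mathlib

section
/- Let P ⊆ ℝⁿ be a permutation-invariant polytope, x' ∈ P, and π a permutation with x'_{π(1)} ≥ ... ≥ x'_{π(n)}. Then there exists u' ∈ P with u' ≥_m x' and sorted(u') ≠ sorted(x') if and only if there does NOT exist a ∈ ℝⁿ with a_{π(1)} > a_{π(2)} > ... > a_{π(n)} such that the inequality Σᵢ aᵢ(xᵢ − x'ᵢ) ≤ 0 is valid for all x ∈ P. -/
/-!
Summation by parts: a strictly decreasing `c : Fin n → ℝ` is the tail-sum vector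
`c i = ∑_{k ≥ i} g k` of weights `g` that are positive except at the last index, so
`∑ i, c i * y i = ∑ k, g k * (y 0 + ⋯ + y k)`. For decreasing rearrangements this turns
majorization into `∑ c i * sorted(x') i ≤ ∑ c i * sorted(u') i`, strictly for a strict majorizer;
as `P` is closed under rearrangement, a strict majorizer rules out every certificate.

Conversely, attach to each vertex `v` the vector `(topSum v (k+1) - topSum x' (k+1))_k`. Averaging
decreasing rearrangements of vertices, on which `topSum` is linear, shows that without a strict
majorizer no nonnegative combination of these vectors is nonnegative, nonzero and zero in the last
coordinate. Farkas' lemma for this finitely generated, hence closed, cone gives weights `g`,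
positive except at the last index, that are nonpositive on every vertex vector. The tail sums of
`g`, arranged along `π`, are a certificate, because `∑_{i ≤ k} v (π i) ≤ topSum v (k+1)` with
equality at `v = x'`.
-/

open Finset

/-- The `i`-th largest entry (0-indexed) of the tuple `x`. -/
noncomputable def sortedDesc (n : ℕ) (x : Fin n → ℝ) : Fin n → ℝ :=
  fun i => x (Tuple.sort x i.rev)

/-- Sum of the `k` largest entries of `x`. -/
noncomputable def topSum (n : ℕ) (x : Fin n → ℝ) (k : ℕ) : ℝ :=
  ∑ i ∈ Finset.univ.filter (fun i : Fin n => (i : ℕ) < k), sortedDesc n x i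

/-- `u` majorizes `x`. -/
def Majorizes (n : ℕ) (u x : Fin n → ℝ) : Prop :=
  (∀ k, k < n → topSum n x k ≤ topSum n u k) ∧ (∑ i, x i = ∑ i, u i)

/-- `u` weakly submajorizes `x`. -/
def WeakSubmajorizes (n : ℕ) (u x : Fin n → ℝ) : Prop :=
  ∀ k, k ≤ n → topSum n x k ≤ topSum n u k

/-- Number of nonzero components. -/
noncomputable def suppCard (n : ℕ) (x : Fin n → ℝ) : ℕ :=
  (Finset.univ.filter (fun i => x i ≠ 0)).card

lemma Finset.sum_le_sum_of_card_eq_of_forall_le {α M : Type*} [DecidableEq α] [AddCommGroup M]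
    [LinearOrder M] [IsOrderedAddMonoid M] {f : α → M}
    {s t : Finset α} (hst : #s = #t) (hf : ∀ i ∈ s \ t, ∀ j ∈ t \ s, f i ≤ f j) :
    ∑ i ∈ s, f i ≤ ∑ i ∈ t, f i := by
  rw [← sub_nonpos, ← sum_sdiff_sub_sum_sdiff, sub_nonpos]
  have hcard : #(s \ t) = #(t \ s) := by grind
  rcases (s \ t).eq_empty_or_nonempty with hempty | hne
  · rw [hempty, card_empty, eq_comm, card_eq_zero] at hcard
    rw [hempty, hcard]
  obtain ⟨b, hb, hbmax⟩ := exists_max_image (s \ t) f hne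
  calc ∑ i ∈ s \ t, f i ≤ #(s \ t) • f b := sum_le_card_nsmul _ _ _ hbmax
    _ = #(t \ s) • f b := by rw [hcard]
    _ ≤ ∑ j ∈ t \ s, f j := card_nsmul_le_sum _ _ _ (hf b hb)

section Rearrangement

variable {n : ℕ}

lemma sortedDesc_antitone (x : Fin n → ℝ) : Antitone (sortedDesc n x) :=
  fun _ _ hij => Tuple.monotone_sort x (Fin.rev_anti hij)

lemma sortedDesc_eq_comp_of_antitone {x : Fin n → ℝ} {π : Equiv.Perm (Fin n)}
    (h : Antitone (x ∘ π)) : sortedDesc n x = x ∘ π := by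
  have hsort : x ∘ ⇑(Fin.revPerm.trans π) = x ∘ Tuple.sort x :=
    Tuple.comp_sort_eq_comp_iff_monotone.mpr (h.comp Fin.rev_anti)
  funext i
  simpa [sortedDesc] using (congrFun hsort i.rev).symm

lemma exists_sortedDesc_eq_comp (x : Fin n → ℝ) :
    ∃ σ : Equiv.Perm (Fin n), sortedDesc n x = x ∘ σ :=
  ⟨Fin.revPerm.trans (Tuple.sort x), rfl⟩

end Rearrangement

section TopSum

variable {n : ℕ}

lemma topSum_zero (x : Fin n → ℝ) : topSum n x 0 = 0 := by
  simp [topSum]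

lemma topSum_self (x : Fin n → ℝ) : topSum n x n = ∑ i, x i := by
  rw [topSum, filter_true_of_mem fun i _ => i.isLt]
  exact Equiv.sum_comp (Fin.revPerm.trans (Tuple.sort x)) x

lemma topSum_succ_eq_sum_Iic (x : Fin n → ℝ) (k : Fin n) :
    topSum n x (k + 1) = ∑ i ∈ Iic k, sortedDesc n x i := by
  rw [topSum]
  congr 1
  ext i
  simp

lemma sortedDesc_eq_topSum_sub (x : Fin n → ℝ) (k : Fin n) :
    sortedDesc n x k = topSum n x (k + 1) - topSum n x k := by
  have hIio : topSum n x k = ∑ i ∈ Iio k, sortedDesc n x i := by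
    rw [topSum]
    congr 1
    ext i
    simp
  rw [topSum_succ_eq_sum_Iic, hIio, Iic_eq_cons_Iio, sum_cons, add_sub_cancel_right]

lemma sortedDesc_eq_of_topSum_eq {u x : Fin n → ℝ}
    (h : ∀ k ≤ n, topSum n u k = topSum n x k) : sortedDesc n u = sortedDesc n x := by
  funext k
  rw [sortedDesc_eq_topSum_sub, sortedDesc_eq_topSum_sub, h _ k.isLt, h _ k.isLt.le]

lemma sum_le_topSum_card (x : Fin n → ℝ) (A : Finset (Fin n)) :
    ∑ i ∈ A, x i ≤ topSum n x #A := by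
  set τ := Fin.revPerm.trans (Tuple.sort x)
  have hA : ∑ i ∈ A, x i = ∑ i ∈ A.map τ.symm.toEmbedding, sortedDesc n x i := by
    rw [sum_map]
    exact sum_congr rfl fun i _ => by simp [τ, sortedDesc]
  rw [hA, topSum]
  apply sum_le_sum_of_card_eq_of_forall_le
  · rw [card_map, Fin.card_filter_val_lt, min_eq_right (by simpa using card_le_univ A)]
  · intro i hi j hj
    simp only [mem_sdiff, mem_filter, mem_univ, true_and, not_lt] at hi hj
    exact sortedDesc_antitone x (Fin.le_def.mpr (by omega))

end TopSum

section TailSum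

variable {n : ℕ}

def tailSum (g : Fin n → ℝ) (i : Fin n) : ℝ := ∑ k ∈ Ici i, g k

lemma sum_tailSum_mul (g z : Fin n → ℝ) :
    ∑ i, tailSum g i * z i = ∑ k, g k * ∑ i ∈ Iic k, z i := by
  simp only [tailSum, sum_mul, mul_sum]
  exact sum_comm' fun i k => by simp

lemma strictAnti_tailSum {g : Fin n → ℝ} (hg : ∀ k : Fin n, (k : ℕ) + 1 < n → 0 < g k) :
    StrictAnti (tailSum g) := by
  intro i j hij
  rw [← sub_pos, tailSum, tailSum, ← sum_sdiff_eq_sub (Ici_subset_Ici.mpr hij.le)]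
  refine sum_pos (fun k hk => hg k ?_) ⟨i, by simpa using hij⟩
  simp only [mem_sdiff, mem_Ici, not_le] at hk
  have := Fin.lt_def.mp hk.2
  omega

lemma StrictAnti.exists_tailSum_eq {c : Fin n → ℝ} (hc : StrictAnti c) :
    ∃ g : Fin n → ℝ, (∀ k : Fin n, (k : ℕ) + 1 < n → 0 < g k) ∧ tailSum g = c := by
  set C : ℕ → ℝ := fun j => if h : j < n then c ⟨j, h⟩ else 0
  refine ⟨fun k => C k - C (k + 1), fun k hk => ?_, funext fun i => ?_⟩
  · simp only [C, dif_pos k.isLt, dif_pos hk, sub_pos]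
    exact hc (Fin.lt_def.mpr (Nat.lt_succ_self k))
  · have hCn : C n = 0 := dif_neg (lt_irrefl n)
    have hIco : tailSum (fun k => C k - C (k + 1)) i = ∑ j ∈ Ico (i : ℕ) n, (C j - C (j + 1)) := by
      rw [tailSum, ← Fin.map_valEmbedding_Ici, sum_map]
      rfl
    rw [hIco, sum_congr rfl fun j _ => (neg_sub (C (j + 1)) (C j)).symm, sum_neg_distrib,
      sum_Ico_sub _ i.isLt.le, hCn]
    simp [C]

end TailSum

section Majorization

variable {n : ℕ}

lemma sum_tailSum_mul_sortedDesc (g x : Fin n → ℝ) :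
    ∑ i, tailSum g i * sortedDesc n x i = ∑ k, g k * topSum n x (k + 1) := by
  simp only [sum_tailSum_mul, topSum_succ_eq_sum_Iic]

lemma sum_Iic_comp_le_topSum (x : Fin n → ℝ) (π : Equiv.Perm (Fin n)) (k : Fin n) :
    ∑ i ∈ Iic k, x (π i) ≤ topSum n x (k + 1) := by
  have := sum_le_topSum_card x ((Iic k).map π.toEmbedding)
  rwa [sum_map, card_map, Fin.card_Iic] at this

lemma sum_tailSum_mul_comp_le {g : Fin n → ℝ} (hg : ∀ k : Fin n, (k : ℕ) + 1 < n → 0 ≤ g k)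
    (x : Fin n → ℝ) (π : Equiv.Perm (Fin n)) :
    ∑ i, tailSum g i * x (π i) ≤ ∑ k, g k * topSum n x (k + 1) := by
  rw [sum_tailSum_mul]
  refine sum_le_sum fun k _ => ?_
  by_cases hk : (k : ℕ) + 1 < n
  · exact mul_le_mul_of_nonneg_left (sum_Iic_comp_le_topSum x π k) (hg k hk)
  · have hIic : Iic k = univ := eq_univ_of_forall fun i => mem_Iic.mpr (Fin.le_def.mpr (by omega))
    rw [hIic, Equiv.sum_comp π x, show (k : ℕ) + 1 = n by omega, topSum_self]

lemma topSum_sum_smul_sortedDesc {ι : Type*} (s : Finset ι) {w : ι → ℝ} (hw : ∀ i ∈ s, 0 ≤ w i)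
    (y : ι → Fin n → ℝ) (k : ℕ) :
    topSum n (∑ i ∈ s, w i • sortedDesc n (y i)) k = ∑ i ∈ s, w i * topSum n (y i) k := by
  have hanti : Antitone (∑ i ∈ s, w i • sortedDesc n (y i)) := fun a b hab => by
    simp only [Finset.sum_apply, Pi.smul_apply, smul_eq_mul]
    exact sum_le_sum fun i hi => mul_le_mul_of_nonneg_left (sortedDesc_antitone _ hab) (hw i hi)
  have hsorted : sortedDesc n (∑ i ∈ s, w i • sortedDesc n (y i)) =
      ∑ i ∈ s, w i • sortedDesc n (y i) :=
    sortedDesc_eq_comp_of_antitone (π := Equiv.refl _) hanti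
  rw [topSum, hsorted]
  simp only [Finset.sum_apply, Pi.smul_apply, smul_eq_mul, topSum, mul_sum]
  exact sum_comm

lemma Majorizes.exists_topSum_lt {u x : Fin n → ℝ} (h : Majorizes n u x)
    (hne : sortedDesc n u ≠ sortedDesc n x) :
    ∃ k : Fin n, (k : ℕ) + 1 < n ∧ topSum n x (k + 1) < topSum n u (k + 1) := by
  by_contra! hle
  refine hne (sortedDesc_eq_of_topSum_eq fun k hk => ?_)
  rcases Nat.eq_zero_or_pos k with rfl | hk0
  · rw [topSum_zero, topSum_zero]
  rcases hk.lt_or_eq with hkn | rfl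
  · have := hle ⟨k - 1, by omega⟩ (show k - 1 + 1 < n by omega)
    simp only [show k - 1 + 1 = k by omega] at this
    exact le_antisymm this (h.1 k hkn)
  · rw [topSum_self, topSum_self, h.2]

lemma Majorizes.sum_mul_sortedDesc_lt {u x : Fin n → ℝ} (h : Majorizes n u x)
    (hne : sortedDesc n u ≠ sortedDesc n x) {c : Fin n → ℝ} (hc : StrictAnti c) :
    ∑ i, c i * sortedDesc n x i < ∑ i, c i * sortedDesc n u i := by
  obtain ⟨g, hg, rfl⟩ := hc.exists_tailSum_eq
  obtain ⟨k₀, hk₀, hlt⟩ := h.exists_topSum_lt hne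
  rw [sum_tailSum_mul_sortedDesc, sum_tailSum_mul_sortedDesc]
  refine sum_lt_sum (fun k _ => ?_) ⟨k₀, mem_univ _, mul_lt_mul_of_pos_left hlt (hg k₀ hk₀)⟩
  by_cases hk : (k : ℕ) + 1 < n
  · exact mul_le_mul_of_nonneg_left (h.1 _ hk) (hg k hk).le
  · rw [show (k : ℕ) + 1 = n by omega, topSum_self, topSum_self, h.2]

end Majorization

section ConicHull

open PointedCone

variable {E : Type*} [AddCommGroup E] [Module ℝ E]

lemma PointedCone.mem_hull_finset_iff {s : Finset E} {x : E} :
    x ∈ hull ℝ (s : Set E) ↔ ∃ μ : E → ℝ, (∀ a ∈ s, 0 ≤ μ a) ∧ ∑ a ∈ s, μ a • a = x := by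
  constructor
  · intro hx
    obtain ⟨f, -, rfl⟩ := Submodule.mem_span_finset.mp hx
    exact ⟨fun a => f a, fun a _ => (f a).2, rfl⟩
  · rintro ⟨μ, hμ, rfl⟩
    exact sum_mem fun a ha => PointedCone.smul_mem _ (hμ a ha) (subset_hull ha)

lemma PointedCone.exists_mem_hull_erase_of_not_linearIndepOn [DecidableEq E] {s : Finset E}
    {x : E} (hs : ¬LinearIndepOn ℝ id (s : Set E)) (hx : x ∈ hull ℝ (s : Set E)) :
    ∃ a ∈ s, x ∈ hull ℝ (s.erase a : Set E) := by
  obtain ⟨μ, hμ, rfl⟩ := mem_hull_finset_iff.mp hx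
  obtain ⟨c, hc, a₀, ha₀, hca₀⟩ : ∃ c : E → ℝ, ∑ a ∈ s, c a • a = 0 ∧ ∃ a ∈ s, 0 < c a := by
    simp only [linearIndepOn_finset_iff, id, not_forall] at hs
    obtain ⟨c, hc, a, ha, hca⟩ := hs
    rcases lt_or_gt_of_ne hca with hneg | hpos
    · exact ⟨-c, by simp [neg_smul, hc], a, ha, by simpa using hneg⟩
    · exact ⟨c, hc, a, ha, hpos⟩
  -- Move along the relation `c` until the first coefficient of `μ` vanishes.
  obtain ⟨a, ha, hmin⟩ := exists_min_image (s.filter (0 < c ·)) (fun a => μ a / c a)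
    ⟨a₀, mem_filter.mpr ⟨ha₀, hca₀⟩⟩
  rw [mem_filter] at ha
  set θ := μ a / c a
  have hθ : 0 ≤ θ := div_nonneg (hμ a ha.1) ha.2.le
  refine ⟨a, ha.1, mem_hull_finset_iff.mpr ⟨fun b => μ b - θ * c b, fun b hb => ?_, ?_⟩⟩
  · have hb := mem_of_mem_erase hb
    rcases le_or_gt (c b) 0 with hcb | hcb
    · nlinarith [hμ b hb]
    · have := (le_div_iff₀ hcb).mp (hmin b (mem_filter.mpr ⟨hb, hcb⟩))
      linarith
  · rw [sum_erase _ (by simp [θ, div_mul_cancel₀ _ ha.2.ne']), ← sub_zero (∑ a ∈ s, μ a • a),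
      ← smul_zero θ, ← hc, smul_sum, ← sum_sub_distrib]
    simp only [sub_smul, mul_smul]

/-- Carathéodory's theorem for cones. -/
lemma PointedCone.exists_linearIndepOn_of_mem_hull {s : Finset E} {x : E}
    (hx : x ∈ hull ℝ (s : Set E)) :
    ∃ t ⊆ s, LinearIndepOn ℝ id (t : Set E) ∧ x ∈ hull ℝ (t : Set E) := by
  classical
  obtain ⟨t, ht, hmin⟩ := exists_min_image
    (s.powerset.filter fun t : Finset E => x ∈ hull ℝ (t : Set E)) card ⟨s, by simp [hx]⟩
  simp only [mem_filter, mem_powerset] at ht hmin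
  refine ⟨t, ht.1, by_contra fun hli => ?_, ht.2⟩
  obtain ⟨a, ha, hxa⟩ := exists_mem_hull_erase_of_not_linearIndepOn hli ht.2
  exact (card_erase_lt_of_mem ha).not_ge (hmin _ ⟨(erase_subset a t).trans ht.1, hxa⟩)

variable [TopologicalSpace E] [IsTopologicalAddGroup E] [ContinuousSMul ℝ E] [T2Space E]

lemma PointedCone.isClosed_hull_of_linearIndepOn {s : Finset E}
    (hs : LinearIndepOn ℝ id (s : Set E)) : IsClosed (hull ℝ (s : Set E) : Set E) := by
  set L := Fintype.linearCombination ℝ (fun a : (s : Set E) => (a : E))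
  have hL : Topology.IsClosedEmbedding L := LinearMap.isClosedEmbedding_of_injective
    (LinearMap.ker_eq_bot.mpr hs.fintypeLinearCombination_injective)
  have himage : (hull ℝ (s : Set E) : Set E) = L '' Set.Ici 0 := by
    ext x
    constructor
    · intro hx
      obtain ⟨μ, hμ, rfl⟩ := mem_hull_finset_iff.mp hx
      refine ⟨fun a => μ a, fun a => hμ a a.2, ?_⟩
      simp [L, Fintype.linearCombination_apply, ← sum_coe_sort s (fun a => μ a • a)]
    · rintro ⟨ν, hν, rfl⟩
      exact sum_mem fun a _ => PointedCone.smul_mem _ (hν a) (subset_hull a.2)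
  rw [himage]
  exact hL.isClosedMap _ isClosed_Ici

theorem PointedCone.isClosed_hull_finset (s : Finset E) :
    IsClosed (hull ℝ (s : Set E) : Set E) := by
  classical
  have hunion : (hull ℝ (s : Set E) : Set E) =
      ⋃ t ∈ s.powerset.filter fun t : Finset E => LinearIndepOn ℝ id (t : Set E),
        hull ℝ (t : Set E) := by
    refine subset_antisymm (fun x hx => ?_) (Set.iUnion₂_subset fun t ht => ?_)
    · obtain ⟨t, hts, hli, hxt⟩ := exists_linearIndepOn_of_mem_hull hx
      exact Set.mem_biUnion (by simp [hts, hli]) hxt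
    · exact Submodule.span_mono (coe_subset.mpr (mem_powerset.mp (mem_filter.mp ht).1))
  rw [hunion]
  exact isClosed_biUnion_finset fun t ht => isClosed_hull_of_linearIndepOn (mem_filter.mp ht).2

end ConicHull

open PointedCone in
theorem exists_pos_weights_of_forall_notMem_hull {ι κ : Type*} [Fintype ι] [Fintype κ]
    (w : ι → κ → ℝ) (S : Set κ)
    (h : ∀ p ∈ stdSimplex ℝ κ, (∀ k ∉ S, p k = 0) → p ∉ hull ℝ (Set.range w)) :
    ∃ g : κ → ℝ, (∀ k ∈ S, 0 < g k) ∧ ∀ i, ∑ k, g k * w i k ≤ 0 := by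
  classical
  let C : ProperCone ℝ (κ → ℝ) :=
    ⟨hull ℝ (Set.range w), by simpa using isClosed_hull_finset (univ.image w)⟩
  set Z := {p : κ → ℝ | ∀ k ∉ S, p k = 0}
  have hZ : IsClosed Z := by
    simp only [Z, Set.ofPred_forall]
    exact isClosed_iInter fun k => isClosed_iInter fun _ => isClosed_eq (continuous_apply k)
      continuous_const
  have hZconv : Convex ℝ Z := fun p hp q hq a b _ _ _ k hk => by simp [hp k hk, hq k hk]
  obtain ⟨f, hfC, hfK⟩ := C.hyperplane_separation ((convex_stdSimplex ℝ κ).inter hZconv)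
    ((isCompact_stdSimplex ℝ κ).inter_right hZ)
    (Set.disjoint_left.mpr fun p hp => h p hp.1 hp.2)
  refine ⟨fun k => -f (Pi.single k 1), fun k hk => neg_pos.mpr (hfK _ ⟨single_mem_stdSimplex ℝ k,
    fun j hj => Pi.single_eq_of_ne (ne_of_mem_of_not_mem hk hj).symm 1⟩), fun i => ?_⟩
  have hwi := hfC (w i) (subset_hull (Set.mem_range_self i))
  rw [pi_eq_sum_univ' (w i), map_sum] at hwi
  simpa [mul_comm] using hwi

section Certificates

open PointedCone

variable {n : ℕ} {P : Set (Fin n → ℝ)} {π : Equiv.Perm (Fin n)} {x' : Fin n → ℝ}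

lemma sortedDesc_mem (hperm : ∀ x ∈ P, ∀ σ : Equiv.Perm (Fin n), x ∘ σ ∈ P) {x : Fin n → ℝ}
    (hx : x ∈ P) : sortedDesc n x ∈ P := by
  obtain ⟨σ, hσ⟩ := exists_sortedDesc_eq_comp x
  exact hσ ▸ hperm x hx σ

lemma exists_sum_mul_sub_pos_of_majorizes (hperm : ∀ x ∈ P, ∀ σ : Equiv.Perm (Fin n), x ∘ σ ∈ P)
    (hsort : Antitone (fun i => x' (π i))) {u : Fin n → ℝ} (hu : u ∈ P) (hmaj : Majorizes n u x')
    (hne : sortedDesc n u ≠ sortedDesc n x') {a : Fin n → ℝ} (ha : StrictAnti (fun i => a (π i))) :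
    ∃ x ∈ P, 0 < ∑ i, a i * (x i - x' i) := by
  refine ⟨sortedDesc n u ∘ π.symm, hperm _ (sortedDesc_mem hperm hu) _, ?_⟩
  have key := hmaj.sum_mul_sortedDesc_lt hne ha
  rw [sortedDesc_eq_comp_of_antitone hsort] at key
  rw [← Equiv.sum_comp π]
  simp only [Function.comp_apply, Equiv.symm_apply_apply] at key ⊢
  simpa only [mul_sub, sum_sub_distrib, sub_pos] using key

lemma exists_majorizes_of_mem_hull {V : Finset (Fin n → ℝ)} (hVP : ↑V ⊆ P) (hP : Convex ℝ P)
    (hperm : ∀ x ∈ P, ∀ σ : Equiv.Perm (Fin n), x ∘ σ ∈ P)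
    {p : Fin n → ℝ} (hp : p ∈ stdSimplex ℝ (Fin n))
    (hlast : ∀ k : Fin n, ¬(k : ℕ) + 1 < n → p k = 0)
    (hpC : p ∈ hull ℝ (Set.range fun (v : V) (k : Fin n) =>
      topSum n v (k + 1) - topSum n x' (k + 1))) :
    ∃ u ∈ P, Majorizes n u x' ∧ sortedDesc n u ≠ sortedDesc n x' := by
  obtain ⟨μ, hμ⟩ := (Submodule.mem_span_range_iff_exists_fun _).mp hpC
  have hpk : ∀ k, p k = ∑ v : V, (μ v : ℝ) * (topSum n v (k + 1) - topSum n x' (k + 1)) := by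
    intro k
    simp [← hμ, Finset.sum_apply, ← Nonneg.coe_smul]
  set M := ∑ v : V, (μ v : ℝ)
  have hM : 0 < M := by
    refine (sum_nonneg fun v _ => (μ v).2).lt_of_ne fun hM0 => ?_
    have hμ0 : ∀ v, (μ v : ℝ) = 0 := fun v =>
      (sum_eq_zero_iff_of_nonneg fun v _ => (μ v).2).mp hM0.symm v (mem_univ v)
    simpa [hpk, hμ0] using hp.2
  have hw : ∀ v ∈ univ, 0 ≤ (μ v : ℝ) / M := fun v _ => div_nonneg (μ v).2 hM.le
  have hsum : ∑ v : V, (μ v : ℝ) / M = 1 := by rw [← sum_div, div_self hM.ne']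
  -- Average the decreasing rearrangements of the vertices with the weights of `p`
  set u := ∑ v : V, ((μ v : ℝ) / M) • sortedDesc n v
  have hu : u ∈ P := hP.sum_mem hw hsum fun v _ => sortedDesc_mem hperm (hVP v.2)
  have htop : ∀ k : Fin n, topSum n u (k + 1) - topSum n x' (k + 1) = p k / M := by
    intro k
    rw [topSum_sum_smul_sortedDesc _ hw, ← one_mul (topSum n x' _), ← hsum, sum_mul,
      ← sum_sub_distrib, hpk, sum_div]
    exact sum_congr rfl fun v _ => by ring
  obtain ⟨j, hj⟩ : ∃ j, 0 < p j := by
    by_contra! hnonpos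
    have := sum_nonpos fun j (_ : j ∈ univ) => hnonpos j
    linarith [hp.2]
  have hn := j.isLt
  refine ⟨u, hu, ⟨fun m hm => ?_, ?_⟩, fun heq => ?_⟩
  · rcases m with _ | k
    · rw [topSum_zero, topSum_zero]
    · have hk := htop ⟨k, by omega⟩
      have := div_nonneg (hp.1 ⟨k, by omega⟩) hM.le
      dsimp only at hk
      linarith
  · have hl := htop ⟨n - 1, by omega⟩
    rw [hlast _ (show ¬n - 1 + 1 < n by omega), zero_div, sub_eq_zero,
      show n - 1 + 1 = n by omega, topSum_self, topSum_self] at hl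
    exact hl.symm
  · have hj' := htop j
    rw [topSum, topSum, heq, sub_self] at hj'
    exact (div_pos hj hM).ne' hj'.symm

lemma exists_certificate_of_forall_majorizes {V : Finset (Fin n → ℝ)}
    (hP : P = convexHull ℝ (V : Set (Fin n → ℝ)))
    (hperm : ∀ x ∈ P, ∀ σ : Equiv.Perm (Fin n), x ∘ σ ∈ P) (hsort : Antitone (fun i => x' (π i)))
    (hmaj : ∀ u ∈ P, Majorizes n u x' → sortedDesc n u = sortedDesc n x') :
    ∃ a : Fin n → ℝ, StrictAnti (fun i => a (π i)) ∧ ∀ x ∈ P, ∑ i, a i * (x i - x' i) ≤ 0 := by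
  subst hP
  obtain ⟨g, hg, hgV⟩ := exists_pos_weights_of_forall_notMem_hull
    (fun (v : V) (k : Fin n) => topSum n v (k + 1) - topSum n x' (k + 1)) {k | (k : ℕ) + 1 < n}
    fun p hp hlast hpC => by
      obtain ⟨u, hu, hmu, hne⟩ := exists_majorizes_of_mem_hull (subset_convexHull ℝ _)
        (convex_convexHull ℝ _) hperm hp hlast hpC
      exact hne (hmaj u hu hmu)
  set a := tailSum g ∘ π.symm
  have hx' : ∑ i, a i * x' i = ∑ k, g k * topSum n x' (k + 1) := by
    rw [← sum_tailSum_mul_sortedDesc, sortedDesc_eq_comp_of_antitone hsort, ← Equiv.sum_comp π]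
    simp [a]
  have hV : ∀ v ∈ V, ∑ i, a i * v i ≤ ∑ i, a i * x' i := by
    intro v hv
    have hgv := hgV ⟨v, hv⟩
    simp only [mul_sub, sum_sub_distrib, sub_nonpos] at hgv
    rw [hx', ← Equiv.sum_comp π]
    simpa [a] using (sum_tailSum_mul_comp_le (fun k hk => (hg k hk).le) v π).trans hgv
  have hlin : IsLinearMap ℝ fun x : Fin n → ℝ => ∑ i, a i * x i :=
    ⟨fun x y => by simp [mul_add, sum_add_distrib], fun c x => by simp [mul_left_comm, mul_sum]⟩
  refine ⟨a, by simpa [a] using strictAnti_tailSum hg, fun x hx => ?_⟩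
  have hx : ∑ i, a i * x i ≤ ∑ i, a i * x' i := convexHull_min hV (convex_halfSpace_le hlin _) hx
  simpa [mul_sub, sum_sub_distrib] using hx

end Certificates

theorem exists_majorizer_iff_no_strict_certificate_general (n : ℕ)
    (V : Finset (Fin n → ℝ)) (P : Set (Fin n → ℝ))
    (hP : P = convexHull ℝ (V : Set (Fin n → ℝ)))
    (hperm : ∀ x ∈ P, ∀ σ : Equiv.Perm (Fin n), x ∘ σ ∈ P)
    (x' : Fin n → ℝ)
    (π : Equiv.Perm (Fin n)) (hsort : Antitone (fun i => x' (π i))) :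
    (∃ u' ∈ P, Majorizes n u' x' ∧ sortedDesc n u' ≠ sortedDesc n x') ↔
      ¬ ∃ a : Fin n → ℝ, StrictAnti (fun i => a (π i)) ∧
          ∀ x ∈ P, (∑ i, a i * (x i - x' i)) ≤ 0 := by
  constructor
  · rintro ⟨u', hu', hmaj, hne⟩ ⟨a, ha, hcert⟩
    obtain ⟨x, hx, hpos⟩ := exists_sum_mul_sub_pos_of_majorizes hperm hsort hu' hmaj hne ha
    exact (hcert x hx).not_gt hpos
  · intro hno
    by_contra! hmaj
    exact hno (exists_certificate_of_forall_majorizes hP hperm hsort hmaj)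

theorem exists_majorizer_iff_no_strict_certificate (n : ℕ)
    (V : Finset (Fin n → ℝ)) (P : Set (Fin n → ℝ))
    (hP : P = convexHull ℝ (V : Set (Fin n → ℝ)))
    (hperm : ∀ x ∈ P, ∀ σ : Equiv.Perm (Fin n), x ∘ σ ∈ P)
    (x' : Fin n → ℝ) (hx' : x' ∈ P)
    (π : Equiv.Perm (Fin n)) (hsort : Antitone (fun i => x' (π i))) :
    (∃ u' ∈ P, Majorizes n u' x' ∧ sortedDesc n u' ≠ sortedDesc n x') ↔
      ¬ ∃ a : Fin n → ℝ, StrictAnti (fun i => a (π i)) ∧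
          ∀ x ∈ P, (∑ i, a i * (x i - x' i)) ≤ 0 :=
  exists_majorizer_iff_no_strict_certificate_general n V P hP hperm x' π hsort
end

section
/- Let φ: [a,b]ⁿ → ℝ be Schur-concave. For x ∈ [a,b]ⁿ, set S(x) = Σᵢ(xᵢ − a) and define u^s ∈ [a,b]ⁿ by filling coordinates to value b in order until the budget s is exhausted (uᵢ = b for i ≤ i^s, u_{i^s+1} = a + s − (b−a)i^s with i^s = max{i : i(b−a) < s}, uᵢ = a otherwise). Then u^{S(x)} majorizes x, and consequently φ(u^{S(x)}) ≤ φ(x) for every x ∈ [a,b]ⁿ. -/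
/-!
The vector `u^s` is antitone, and for every `k` either its first `k` entries equal `b` or its
last `n - k` entries equal `a`. For `x ∈ [a, b]ⁿ` with the same coordinate sum, the sum of the
`k` largest entries of `x` is at most `k b` and at most `∑ x - (n - k) a`; these are exactly the
two values the corresponding top sum of `u^s` can take, so `u^s` majorizes `x`, and
Schur-concavity of `φ` does the rest.
-/

open Finset

section TopSum

variable {n : ℕ}

lemma card_filter_val_lt_of_le {k : ℕ} (hk : k ≤ n) : #{i : Fin n | (i : ℕ) < k} = k := by
  simp [Fin.card_filter_val_lt, hk]

lemma card_filter_not_val_lt {k : ℕ} (hk : k ≤ n) : #{i : Fin n | ¬ (i : ℕ) < k} = n - k := by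
  rw [filter_not, card_sdiff_of_subset (filter_subset _ _), card_filter_val_lt_of_le hk]
  simp

lemma sum_sortedDesc (x : Fin n → ℝ) : ∑ i, sortedDesc n x i = ∑ i, x i :=
  (Fin.revPerm.trans (Tuple.sort x)).sum_comp x

lemma sortedDesc_eq_self_of_antitone {u : Fin n → ℝ} (hu : Antitone u) : sortedDesc n u = u := by
  have hmono : Monotone (u ∘ Fin.revPerm) := fun i j hij => hu (Fin.rev_le_rev.mpr hij)
  funext i
  simpa [sortedDesc] using
    (congrFun (Tuple.comp_sort_eq_comp_iff_monotone.mpr hmono) i.rev).symm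

lemma topSum_add_sum_filter_not (x : Fin n → ℝ) (k : ℕ) :
    topSum n x k + ∑ i ∈ univ.filter (fun i : Fin n => ¬ (i : ℕ) < k), sortedDesc n x i =
      ∑ i, x i := by
  rw [topSum, sum_filter_add_sum_filter_not, sum_sortedDesc]

lemma topSum_le_mul {x : Fin n → ℝ} {b : ℝ} (hb : ∀ i, x i ≤ b) {k : ℕ} (hk : k ≤ n) :
    topSum n x k ≤ k * b := by
  have htop := sum_le_card_nsmul (univ.filter fun i : Fin n => (i : ℕ) < k) (sortedDesc n x) b
    fun i _ => hb _
  rwa [card_filter_val_lt_of_le hk, nsmul_eq_mul] at htop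

lemma topSum_le_sum_sub_mul {x : Fin n → ℝ} {a : ℝ} (ha : ∀ i, a ≤ x i) {k : ℕ} (hk : k ≤ n) :
    topSum n x k ≤ ∑ i, x i - (n - k : ℕ) * a := by
  have hbot := card_nsmul_le_sum (univ.filter fun i : Fin n => ¬ (i : ℕ) < k) (sortedDesc n x) a
    fun i _ => ha _
  rw [card_filter_not_val_lt hk, nsmul_eq_mul] at hbot
  linarith [topSum_add_sum_filter_not x k]

lemma topSum_eq_mul_of_antitone {u : Fin n → ℝ} (hu : Antitone u) {b : ℝ} {k : ℕ} (hk : k ≤ n)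
    (hb : ∀ i : Fin n, (i : ℕ) < k → u i = b) : topSum n u k = k * b := by
  rw [topSum, sortedDesc_eq_self_of_antitone hu,
    sum_congr rfl fun i hi => hb i (mem_filter.1 hi).2]
  simp [card_filter_val_lt_of_le hk]

lemma topSum_eq_sum_sub_mul_of_antitone {u : Fin n → ℝ} (hu : Antitone u) {a : ℝ} {k : ℕ}
    (hk : k ≤ n) (ha : ∀ i : Fin n, k ≤ (i : ℕ) → u i = a) :
    topSum n u k = ∑ i, u i - (n - k : ℕ) * a := by
  have hbot : ∑ i ∈ univ.filter (fun i : Fin n => ¬ (i : ℕ) < k), sortedDesc n u i =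
      (n - k : ℕ) * a := by
    rw [sortedDesc_eq_self_of_antitone hu,
      sum_congr rfl fun i hi => ha i (not_lt.1 (mem_filter.1 hi).2), sum_const,
      card_filter_not_val_lt hk, nsmul_eq_mul]
  linarith [topSum_add_sum_filter_not u k]

theorem majorizes_of_antitone_of_extremal {u x : Fin n → ℝ} {a b : ℝ} (hu : Antitone u)
    (hx : ∀ i, x i ∈ Set.Icc a b) (hsum : ∑ i, x i = ∑ i, u i)
    (hext : ∀ k, (∀ i : Fin n, (i : ℕ) < k → u i = b) ∨ (∀ i : Fin n, k ≤ (i : ℕ) → u i = a)) :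
    Majorizes n u x := by
  refine ⟨fun k hk => ?_, hsum⟩
  rcases hext k with htop | hbot
  · rw [topSum_eq_mul_of_antitone hu hk.le htop]
    exact topSum_le_mul (fun i => (hx i).2) hk.le
  · rw [topSum_eq_sum_sub_mul_of_antitone hu hk.le hbot, ← hsum]
    exact topSum_le_sum_sub_mul (fun i => (hx i).1) hk.le

end TopSum

section FillVector

def fillVector (n : ℕ) (a b t : ℝ) (m : ℕ) : Fin n → ℝ :=
  fun i => if (i : ℕ) < m then b else if (i : ℕ) = m then t else a

variable {n : ℕ} {a b t : ℝ} {m : ℕ}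

lemma fillVector_mem_Icc (ht : t ∈ Set.Icc a b) (i : Fin n) :
    fillVector n a b t m i ∈ Set.Icc a b := by
  have hab : a ≤ b := ht.1.trans ht.2
  unfold fillVector
  split_ifs
  exacts [⟨hab, le_rfl⟩, ht, ⟨le_rfl, hab⟩]

lemma fillVector_antitone (ht : t ∈ Set.Icc a b) : Antitone (fillVector n a b t m) := by
  intro i j hij
  have hij : (i : ℕ) ≤ j := hij
  unfold fillVector
  split_ifs <;> first | omega | linarith [ht.1, ht.2]

lemma fillVector_extremal (k : ℕ) :
    (∀ i : Fin n, (i : ℕ) < k → fillVector n a b t m i = b) ∨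
      (∀ i : Fin n, k ≤ (i : ℕ) → fillVector n a b t m i = a) := by
  rcases le_or_gt k m with hkm | hmk
  · exact .inl fun i hi => if_pos (by omega)
  · exact .inr fun i hi => by rw [fillVector, if_neg (by omega), if_neg (by omega)]

lemma sum_fillVector (hm : m < n) :
    ∑ i, fillVector n a b t m i = n * a + m * (b - a) + (t - a) := by
  have hsplit : ∀ i : Fin n, fillVector n a b t m i =
      a + (if (i : ℕ) < m then b - a else 0) + (if i = ⟨m, hm⟩ then t - a else 0) := by
    intro i
    simp only [fillVector, Fin.ext_iff]
    split_ifs <;> first | omega | ring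
  simp [hsplit, sum_add_distrib, sum_ite, card_filter_val_lt_of_le hm.le]
  ring

end FillVector

lemma card_filter_natCast_mul_lt {n : ℕ} {c s : ℝ} (hc : 0 < c) (hs : s ≤ n * c) :
    #((range (n + 1)).filter fun i : ℕ => (i : ℝ) * c < s) = ⌈s / c⌉₊ := by
  have hceil : ⌈s / c⌉₊ ≤ n := Nat.ceil_le.2 ((div_le_iff₀ hc).2 hs)
  have hfilter : (range (n + 1)).filter (fun i : ℕ => (i : ℝ) * c < s) = range ⌈s / c⌉₊ := by
    ext i
    rw [mem_filter, mem_range, mem_range, ← lt_div_iff₀ hc, ← Nat.lt_ceil]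
    omega
  rw [hfilter, card_range]

lemma natCast_ceil_sub_one_le {r : ℝ} (hr : 0 ≤ r) : ((⌈r⌉₊ - 1 : ℕ) : ℝ) ≤ r := by
  rcases Nat.eq_zero_or_pos ⌈r⌉₊ with h | h
  · simpa [h] using hr
  · rw [Nat.cast_sub h, Nat.cast_one]
    linarith [Nat.ceil_lt_add_one hr]

lemma le_natCast_ceil_sub_one_add_one (r : ℝ) : r ≤ ((⌈r⌉₊ - 1 : ℕ) : ℝ) + 1 := by
  have h : ⌈r⌉₊ ≤ ⌈r⌉₊ - 1 + 1 := by omega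
  exact (Nat.le_ceil r).trans (by exact_mod_cast h)

/-- `m` is the paper's `i^s`, the index of the partially filled coordinate when the budget `s`
is spent in portions of size `c`; truncated subtraction makes `m = 0` when `s = 0`. -/
lemma fill_index_bounds {n : ℕ} (hn : 0 < n) {c s : ℝ} (hc : 0 < c) (hs₀ : 0 ≤ s)
    (hs : s ≤ n * c) {m : ℕ}
    (hm : m = #((range (n + 1)).filter fun i : ℕ => (i : ℝ) * c < s) - 1) :
    m < n ∧ m * c ≤ s ∧ s ≤ (m + 1) * c := by
  rw [card_filter_natCast_mul_lt hc hs] at hm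
  have hceil : ⌈s / c⌉₊ ≤ n := Nat.ceil_le.2 ((div_le_iff₀ hc).2 hs)
  subst hm
  exact ⟨by omega, (le_div_iff₀ hc).1 (natCast_ceil_sub_one_le (div_nonneg hs₀ hc.le)),
    (div_le_iff₀ hc).1 (le_natCast_ceil_sub_one_add_one _)⟩

theorem schur_concave_box_majorizer (n : ℕ) (a b : ℝ) (hab : a < b)
    (φ : (Fin n → ℝ) → ℝ)
    (hschur : ∀ x y : Fin n → ℝ, (∀ i, x i ∈ Set.Icc a b) → (∀ i, y i ∈ Set.Icc a b) →
      Majorizes n x y → φ x ≤ φ y)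
    (iS : ℝ → ℕ)
    (hiS : ∀ s : ℝ,
      iS s = ((Finset.range (n + 1)).filter (fun i : ℕ => (i : ℝ) * (b - a) < s)).card - 1)
    (u : ℝ → Fin n → ℝ)
    (hu : ∀ (s : ℝ) (i : Fin n), u s i =
      if (i : ℕ) < iS s then b
      else if (i : ℕ) = iS s then a + s - (b - a) * (iS s) else a)
    (x : Fin n → ℝ) (hx : ∀ i, x i ∈ Set.Icc a b) :
    Majorizes n (u (∑ i, (x i - a))) x ∧ φ (u (∑ i, (x i - a))) ≤ φ x := by
  set s := ∑ i, (x i - a)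
  suffices h : Majorizes n (u s) x ∧ ∀ i, u s i ∈ Set.Icc a b from ⟨h.1, hschur _ _ h.2 hx h.1⟩
  rcases n.eq_zero_or_pos with rfl | hn
  · exact ⟨⟨fun k hk => absurd hk k.not_lt_zero, by simp⟩, fun i => i.elim0⟩
  have hsum_x : ∑ i, x i = n * a + s := by simp [s, sum_sub_distrib]
  have hs₀ : 0 ≤ s := sum_nonneg fun i _ => sub_nonneg.2 (hx i).1
  have hs : s ≤ n * (b - a) := by
    calc s ≤ ∑ _i : Fin n, (b - a) := sum_le_sum fun i _ => sub_le_sub_right (hx i).2 a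
      _ = n * (b - a) := by simp [mul_sub]
  obtain ⟨hmn, hms, hsm⟩ := fill_index_bounds hn (sub_pos.2 hab) hs₀ hs (hiS s)
  set t := a + s - (b - a) * iS s
  have ht : t ∈ Set.Icc a b := ⟨by linarith, by linarith⟩
  rw [show u s = fillVector n a b t (iS s) from funext (hu s)]
  refine ⟨majorizes_of_antitone_of_extremal (fillVector_antitone ht) hx ?_ fillVector_extremal,
    fillVector_mem_Icc ht⟩
  rw [sum_fillVector hmn, hsum_x]
  ring
end

section
/- Let w ∈ ℝⁿ with w ≥ 0 and let 1 ≤ r ≤ n. The maximum of Σᵢⱼ wᵢwⱼ tᵢⱼ over t ∈ [0,1]^{n×n} subject to Σⱼ tᵢⱼ ≤ 1 for all i, Σᵢ tᵢⱼ ≤ 1 for all j, and Σᵢⱼ tᵢⱼ ≤ r, equals Σ_{i=1}^r w_[i]², the sum of the r largest squared entries of w. -/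
open Finset

/-- Budget lemma: if all entries of `a` outside `S` are at most `m`, all inside are at
least `m ≥ 0`, and `ρ ∈ [0,1]^n` has total mass at most `|S|`, then `∑ aᵢρᵢ ≤ ∑_{S} aᵢ`. -/
lemma budget_le {n : ℕ} (a ρ : Fin n → ℝ) (S : Finset (Fin n)) (m : ℝ)
    (hm : 0 ≤ m)
    (hout : ∀ i ∉ S, a i ≤ m) (hin : ∀ i ∈ S, m ≤ a i)
    (hρ0 : ∀ i, 0 ≤ ρ i) (hρ1 : ∀ i, ρ i ≤ 1)
    (hsum : ∑ i, ρ i ≤ (S.card : ℝ)) :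
    ∑ i, a i * ρ i ≤ ∑ i ∈ S, a i := by
  have h1 : ∑ i, a i * ρ i = ∑ i ∈ S, a i * ρ i + ∑ i ∈ Sᶜ, a i * ρ i :=
    (Finset.sum_add_sum_compl S _).symm
  have h2 : ∑ i ∈ Sᶜ, a i * ρ i ≤ m * ∑ i ∈ Sᶜ, ρ i := by
    rw [Finset.mul_sum]
    exact Finset.sum_le_sum fun i hi =>
      mul_le_mul_of_nonneg_right (hout i (by simpa using hi)) (hρ0 i)
  have h3 : ∑ i ∈ Sᶜ, ρ i = ∑ i, ρ i - ∑ i ∈ S, ρ i := by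
    have := Finset.sum_add_sum_compl S ρ
    linarith
  have h4 : m * ∑ i ∈ Sᶜ, ρ i ≤ m * ((S.card : ℝ) - ∑ i ∈ S, ρ i) := by
    apply mul_le_mul_of_nonneg_left _ hm
    rw [h3]; linarith
  have h5 : m * ((S.card : ℝ) - ∑ i ∈ S, ρ i) = ∑ i ∈ S, m * (1 - ρ i) := by
    simp only [mul_sub, mul_one, Finset.sum_sub_distrib, Finset.sum_const, nsmul_eq_mul,
      Finset.mul_sum]
    ring
  have h6 : ∑ i ∈ S, m * (1 - ρ i) ≤ ∑ i ∈ S, a i * (1 - ρ i) :=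
    Finset.sum_le_sum fun i hi => mul_le_mul_of_nonneg_right (hin i hi) (by linarith [hρ1 i])
  have h7 : ∑ i ∈ S, a i * ρ i + ∑ i ∈ S, a i * (1 - ρ i) = ∑ i ∈ S, a i := by
    rw [← Finset.sum_add_distrib]; apply Finset.sum_congr rfl; intros; ring
  linarith

theorem lp_value_sum_r_largest_squares (n r : ℕ) (hr1 : 1 ≤ r) (hrn : r ≤ n)
    (w : Fin n → ℝ) (hw : ∀ i, 0 ≤ w i) :
    IsGreatest {v : ℝ | ∃ t : Fin n → Fin n → ℝ,
        (∀ i j, 0 ≤ t i j ∧ t i j ≤ 1) ∧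
        (∀ i, (∑ j, t i j) ≤ 1) ∧
        (∀ j, (∑ i, t i j) ≤ 1) ∧
        (∑ i, ∑ j, t i j) ≤ (r : ℝ) ∧
        v = ∑ i, ∑ j, w i * w j * t i j}
      (∑ i ∈ Finset.univ.filter (fun i : Fin n => (i : ℕ) < r), (sortedDesc n w i) ^ 2) := by
  classical
  set σ := Tuple.sort w with hσ
  have hmono : Monotone (w ∘ σ) := Tuple.monotone_sort w
  set T : Finset (Fin n) := Finset.univ.filter (fun i : Fin n => (i : ℕ) < r) with hTdef
  set S : Finset (Fin n) := T.image (fun i => σ i.rev) with hSdef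
  have hinj : Function.Injective (fun i : Fin n => σ i.rev) :=
    fun a b h => Fin.rev_injective (σ.injective h)
  have hT : T.card = r := by
    rcases Nat.lt_or_ge r n with h | h
    · have hTe : T = Finset.Iio (⟨r, h⟩ : Fin n) := by
        ext i; simp [hTdef, Fin.lt_def]
      rw [hTe, Fin.card_Iio]
    · have hrn' : r = n := le_antisymm hrn h
      have hTe : T = Finset.univ := by
        ext i; simp only [hTdef, Finset.mem_filter, Finset.mem_univ, true_and, iff_true]
        omega
      rw [hTe, Finset.card_univ, Fintype.card_fin, hrn']
  have hS : S.card = r := by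
    rw [hSdef, Finset.card_image_of_injective _ hinj, hT]
  have hmemS : ∀ i, i ∈ S ↔ n - r ≤ (σ.symm i : ℕ) := by
    intro i
    simp only [hSdef, Finset.mem_image, hTdef, Finset.mem_filter, Finset.mem_univ, true_and]
    constructor
    · rintro ⟨k, hk, rfl⟩
      rw [Equiv.symm_apply_apply]
      have h1 := Fin.val_rev k
      have h2 : (k : ℕ) < n := k.isLt
      omega
    · intro h
      refine ⟨(σ.symm i).rev, ?_, ?_⟩
      · rw [Fin.val_rev]
        have h2 : ((σ.symm i : Fin n) : ℕ) < n := (σ.symm i).isLt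
        omega
      · rw [Fin.rev_rev, Equiv.apply_symm_apply]
  -- the pivot value
  set j0 : Fin n := σ ⟨n - r, by omega⟩ with hj0
  set m : ℝ := w j0 ^ 2 with hm
  have hout : ∀ i ∉ S, w i ^ 2 ≤ m := by
    intro i hi
    rw [hmemS] at hi
    have hle : (σ.symm i : Fin n) ≤ (⟨n - r, by omega⟩ : Fin n) :=
      Fin.le_def.mpr (show ((σ.symm i : Fin n) : ℕ) ≤ n - r by omega)
    have := hmono hle
    simp only [Function.comp_apply, Equiv.apply_symm_apply] at this
    exact pow_le_pow_left₀ (hw i) this 2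
  have hin : ∀ i ∈ S, m ≤ w i ^ 2 := by
    intro i hi
    rw [hmemS i] at hi
    have hle : (⟨n - r, by omega⟩ : Fin n) ≤ (σ.symm i : Fin n) :=
      Fin.le_def.mpr (show n - r ≤ ((σ.symm i : Fin n) : ℕ) from hi)
    have := hmono hle
    simp only [Function.comp_apply, Equiv.apply_symm_apply] at this
    exact pow_le_pow_left₀ (hw j0) this 2
  have hm0 : 0 ≤ m := sq_nonneg _
  have hsumS : ∑ i ∈ S, w i ^ 2 = ∑ i ∈ T, (sortedDesc n w i) ^ 2 := by
    rw [hSdef, Finset.sum_image (fun a _ b _ h => hinj h)]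
    rfl
  constructor
  · -- membership: the optimal transport plan
    refine ⟨fun i j => if i = j ∧ i ∈ S then 1 else 0, ?_, ?_, ?_, ?_, ?_⟩ <;> dsimp only
    · intro i j; constructor <;> split <;> norm_num
    · intro i
      simp only [ite_and, Finset.sum_ite_eq, Finset.mem_univ, if_true]
      split <;> norm_num
    · intro j
      have : ∀ i : Fin n, (if i = j ∧ i ∈ S then (1:ℝ) else 0)
          = if i = j then (if j ∈ S then (1:ℝ) else 0) else 0 := by
        intro i; by_cases h : i = j <;> simp [h]
      simp only [this, Finset.sum_ite_eq', Finset.mem_univ, if_true]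
      split <;> norm_num
    · have hrow : ∀ i : Fin n, (∑ j, if i = j ∧ i ∈ S then (1:ℝ) else 0)
          = if i ∈ S then 1 else 0 := by
        intro i
        simp only [ite_and, Finset.sum_ite_eq, Finset.mem_univ, if_true]
      rw [Finset.sum_congr rfl fun i _ => hrow i]
      rw [Finset.sum_ite_mem, Finset.univ_inter, Finset.sum_const, nsmul_eq_mul, mul_one, hS]
    · have hrow : ∀ i : Fin n, (∑ j, w i * w j * if i = j ∧ i ∈ S then (1:ℝ) else 0)
          = if i ∈ S then w i ^ 2 else 0 := by
        intro i
        have : ∀ j : Fin n, (w i * w j * if i = j ∧ i ∈ S then (1:ℝ) else 0)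
            = if i = j then (if i ∈ S then w i * w j else 0) else 0 := by
          intro j; by_cases h : i = j <;> by_cases h' : i ∈ S <;> simp [h, h']
        simp only [this, Finset.sum_ite_eq, Finset.mem_univ, if_true]
        split <;> [ring; rfl]
      rw [Finset.sum_congr rfl fun i _ => hrow i, Finset.sum_ite_mem, Finset.univ_inter, hsumS]
  · -- upper bound
    rintro v ⟨t, hbound, hrow, hcol, htot, rfl⟩
    set ρ : Fin n → ℝ := fun i => ∑ j, t i j with hρ
    set c : Fin n → ℝ := fun j => ∑ i, t i j with hc
    have hstep1 : ∑ i, ∑ j, w i * w j * t i j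
        ≤ (∑ i, w i ^ 2 * ρ i + ∑ j, w j ^ 2 * c j) / 2 := by
      have hpt : ∀ i j, w i * w j * t i j ≤ (w i ^ 2 + w j ^ 2) / 2 * t i j := by
        intro i j
        apply mul_le_mul_of_nonneg_right _ (hbound i j).1
        nlinarith [sq_nonneg (w i - w j)]
      calc ∑ i, ∑ j, w i * w j * t i j
          ≤ ∑ i, ∑ j, (w i ^ 2 + w j ^ 2) / 2 * t i j :=
            Finset.sum_le_sum fun i _ => Finset.sum_le_sum fun j _ => hpt i j
        _ = (∑ i, ∑ j, w i ^ 2 * t i j + ∑ i, ∑ j, w j ^ 2 * t i j) / 2 := by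
            rw [← Finset.sum_add_distrib]
            rw [Finset.sum_div]
            apply Finset.sum_congr rfl; intro i _
            rw [← Finset.sum_add_distrib, Finset.sum_div]
            apply Finset.sum_congr rfl; intro j _
            ring
        _ = (∑ i, w i ^ 2 * ρ i + ∑ j, w j ^ 2 * c j) / 2 := by
            congr 1
            congr 1
            · exact Finset.sum_congr rfl fun i _ => (Finset.mul_sum _ _ _).symm
            · rw [Finset.sum_comm]
              exact Finset.sum_congr rfl fun j _ => (Finset.mul_sum _ _ _).symm
    have hρsum : ∑ i, ρ i ≤ (S.card : ℝ) := by rw [hS]; exact htot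
    have hcsum : ∑ j, c j ≤ (S.card : ℝ) := by
      rw [hS, hc]
      calc ∑ j, ∑ i, t i j = ∑ i, ∑ j, t i j := Finset.sum_comm
        _ ≤ (r : ℝ) := htot
    have hb1 : ∑ i, w i ^ 2 * ρ i ≤ ∑ i ∈ S, w i ^ 2 :=
      budget_le _ _ S m hm0 hout hin
        (fun i => Finset.sum_nonneg fun j _ => (hbound i j).1) hrow hρsum
    have hb2 : ∑ j, w j ^ 2 * c j ≤ ∑ i ∈ S, w i ^ 2 :=
      budget_le _ _ S m hm0 hout hin
        (fun j => Finset.sum_nonneg fun i _ => (hbound i j).1) hcol hcsum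
    have : ∑ i, ∑ j, w i * w j * t i j ≤ ∑ i ∈ S, w i ^ 2 := by
      calc ∑ i, ∑ j, w i * w j * t i j
          ≤ (∑ i, w i ^ 2 * ρ i + ∑ j, w j ^ 2 * c j) / 2 := hstep1
        _ ≤ (∑ i ∈ S, w i ^ 2 + ∑ i ∈ S, w i ^ 2) / 2 := by linarith
        _ = ∑ i ∈ S, w i ^ 2 := by ring
    rw [hsumS] at this
    exact this
end

section
/- Let w ∈ ℝⁿ with w ≥ 0, and let p, q ∈ {1,...,n} with r = pq. The maximum of Σᵢⱼ wᵢwⱼ tᵢⱼ over t ∈ [0,1]^{n×n} subject to Σⱼ tᵢⱼ ≤ q for all i, Σᵢ tᵢⱼ ≤ p for all j, and Σᵢⱼ tᵢⱼ ≤ pq, equals (Σ_{i=1}^p w_[i])·(Σ_{j=1}^q w_[j]). -/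
open Finset

lemma antitone_sortedDesc (n : ℕ) (x : Fin n → ℝ) : Antitone (sortedDesc n x) := by
  intro a b hab
  exact Tuple.monotone_sort x (Fin.rev_le_rev.mpr hab)

lemma card_filter_lt (n k : ℕ) (h : k ≤ n) :
    (univ.filter (fun i : Fin n => (i:ℕ) < k)).card = k := by
  have h1 := Finset.card_image_of_injective (univ.filter (fun i : Fin n => (i:ℕ) < k))
    (Fin.val_injective)
  rw [← h1]
  have h2 : (univ.filter (fun i : Fin n => (i:ℕ) < k)).image Fin.val = Finset.range k := by
    ext a
    simp only [Finset.mem_image, Finset.mem_filter, Finset.mem_univ, true_and, Finset.mem_range]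
    constructor
    · rintro ⟨b, hb, rfl⟩; exact hb
    · intro ha; exact ⟨⟨a, lt_of_lt_of_le ha h⟩, ha, rfl⟩
  rw [h2, Finset.card_range]

/-- The sorting bijection (descending). -/
noncomputable def descPerm (n : ℕ) (w : Fin n → ℝ) : Equiv.Perm (Fin n) :=
  (Fin.revPerm).trans (Tuple.sort w)

lemma descPerm_apply (n : ℕ) (w : Fin n → ℝ) (i : Fin n) :
    w (descPerm n w i) = sortedDesc n w i := rfl

lemma sum_perm (n : ℕ) (w s : Fin n → ℝ) :
    ∑ i, w i * s i = ∑ i, sortedDesc n w i * s (descPerm n w i) := by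
  rw [← Equiv.sum_comp (descPerm n w) (fun i => w i * s i)]
  rfl

/-- Key lemma for antitone nonnegative weights. -/
lemma key_sorted (n k : ℕ) (hk1 : 1 ≤ k) (hkn : k ≤ n) (v s : Fin n → ℝ)
    (hv : Antitone v) (hv0 : ∀ i, 0 ≤ v i) (hs0 : ∀ i, 0 ≤ s i) (hs1 : ∀ i, s i ≤ 1)
    (hsum : ∑ i, s i ≤ (k : ℝ)) :
    ∑ i, v i * s i ≤ ∑ i ∈ univ.filter (fun i : Fin n => (i:ℕ) < k), v i := by
  set F := univ.filter (fun i : Fin n => (i:ℕ) < k) with hF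
  have hcard : F.card = k := card_filter_lt n k hkn
  set m := v ⟨k - 1, by omega⟩ with hm
  have hm0 : 0 ≤ m := hv0 _
  have split : ∑ i, v i * s i = ∑ i ∈ F, v i * s i + ∑ i ∈ Fᶜ, v i * s i :=
    (Finset.sum_add_sum_compl F _).symm
  have h1 : ∑ i ∈ F, v i * s i ≤ ∑ i ∈ F, (v i + m * (s i - 1)) := by
    apply Finset.sum_le_sum
    intro i hi
    have hik : (i : ℕ) < k := by simpa [hF] using hi
    have hvm : m ≤ v i := hv (show i ≤ ⟨k - 1, by omega⟩ by
      rw [Fin.le_def]; simp; omega)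
    nlinarith [hs1 i, hs0 i]
  have h2 : ∑ i ∈ Fᶜ, v i * s i ≤ ∑ i ∈ Fᶜ, m * s i := by
    apply Finset.sum_le_sum
    intro i hi
    have hik : ¬ (i : ℕ) < k := by
      simp only [hF, Finset.mem_compl, Finset.mem_filter, Finset.mem_univ, true_and] at hi
      exact hi
    have hvm : v i ≤ m := hv (show (⟨k - 1, by omega⟩ : Fin n) ≤ i by
      rw [Fin.le_def]; simp; omega)
    nlinarith [hs0 i]
  have h3 : ∑ i ∈ F, (v i + m * (s i - 1)) + ∑ i ∈ Fᶜ, m * s i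
      = ∑ i ∈ F, v i + m * (∑ i, s i - k) := by
    rw [Finset.sum_add_distrib, ← Finset.mul_sum, ← Finset.mul_sum]
    have : ∑ i ∈ F, (s i - 1) = ∑ i ∈ F, s i - k := by
      rw [Finset.sum_sub_distrib, Finset.sum_const, hcard, nsmul_eq_mul, mul_one]
    rw [this, ← Finset.sum_add_sum_compl F s]
    ring
  have h4 : m * (∑ i, s i - k) ≤ 0 := mul_nonpos_of_nonneg_of_nonpos hm0 (by linarith)
  linarith

/-- Key lemma for general nonnegative weights. -/
lemma key_lemma (n k : ℕ) (hk1 : 1 ≤ k) (hkn : k ≤ n) (w s : Fin n → ℝ)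
    (hw : ∀ i, 0 ≤ w i) (hs0 : ∀ i, 0 ≤ s i) (hs1 : ∀ i, s i ≤ 1)
    (hsum : ∑ i, s i ≤ (k : ℝ)) :
    ∑ i, w i * s i ≤ ∑ i ∈ univ.filter (fun i : Fin n => (i:ℕ) < k), sortedDesc n w i := by
  rw [sum_perm]
  exact key_sorted n k hk1 hkn (sortedDesc n w) (fun i => s (descPerm n w i))
    (antitone_sortedDesc n w) (fun i => hw _) (fun i => hs0 _) (fun i => hs1 _)
    (by rw [Equiv.sum_comp (descPerm n w) s]; exact hsum)

theorem lp_value_transportation (n p q : ℕ) (hp1 : 1 ≤ p) (hpn : p ≤ n)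
    (hq1 : 1 ≤ q) (hqn : q ≤ n) (w : Fin n → ℝ) (hw : ∀ i, 0 ≤ w i) :
    IsGreatest {v : ℝ | ∃ t : Fin n → Fin n → ℝ,
        (∀ i j, 0 ≤ t i j ∧ t i j ≤ 1) ∧
        (∀ i, (∑ j, t i j) ≤ (q : ℝ)) ∧
        (∀ j, (∑ i, t i j) ≤ (p : ℝ)) ∧
        (∑ i, ∑ j, t i j) ≤ (p : ℝ) * (q : ℝ) ∧
        v = ∑ i, ∑ j, w i * w j * t i j}
      ((∑ i ∈ Finset.univ.filter (fun i : Fin n => (i : ℕ) < p), sortedDesc n w i) *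
       (∑ j ∈ Finset.univ.filter (fun j : Fin n => (j : ℕ) < q), sortedDesc n w j)) := by
  set A := ∑ i ∈ Finset.univ.filter (fun i : Fin n => (i : ℕ) < p), sortedDesc n w i with hA
  set B := ∑ j ∈ Finset.univ.filter (fun j : Fin n => (j : ℕ) < q), sortedDesc n w j with hB
  have hB0 : 0 ≤ B := Finset.sum_nonneg (fun i _ => hw _)
  constructor
  · -- membership
    set σ := descPerm n w with hσ
    set P := (univ.filter (fun i : Fin n => (i:ℕ) < p)).image σ with hP
    set Q := (univ.filter (fun i : Fin n => (i:ℕ) < q)).image σ with hQ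
    have hPcard : P.card = p := by
      rw [hP, Finset.card_image_of_injective _ σ.injective, card_filter_lt n p hpn]
    have hQcard : Q.card = q := by
      rw [hQ, Finset.card_image_of_injective _ σ.injective, card_filter_lt n q hqn]
    have hPsum : ∑ i ∈ P, w i = A := by
      rw [hP, Finset.sum_image (fun a _ b _ h => σ.injective h)]
      rfl
    have hQsum : ∑ i ∈ Q, w i = B := by
      rw [hQ, Finset.sum_image (fun a _ b _ h => σ.injective h)]
      rfl
    refine ⟨fun i j => (if i ∈ P then (1:ℝ) else 0) * (if j ∈ Q then (1:ℝ) else 0),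
      ?_, ?_, ?_, ?_, ?_⟩
    · intro i j
      dsimp only
      constructor
      · positivity
      · split_ifs <;> norm_num
    · intro i
      have : ∑ j, (if i ∈ P then (1:ℝ) else 0) * (if j ∈ Q then (1:ℝ) else 0)
          = (if i ∈ P then (1:ℝ) else 0) * Q.card := by
        rw [← Finset.mul_sum]
        congr 1
        simp [Finset.sum_ite_mem]
      rw [this, hQcard]
      split_ifs <;> simp
    · intro j
      have : ∑ i, (if i ∈ P then (1:ℝ) else 0) * (if j ∈ Q then (1:ℝ) else 0)
          = (P.card : ℝ) * (if j ∈ Q then (1:ℝ) else 0) := by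
        rw [← Finset.sum_mul]
        congr 1
        simp [Finset.sum_ite_mem]
      rw [this, hPcard]
      split_ifs <;> simp [Nat.cast_le]
    · have : ∑ i, ∑ j, (if i ∈ P then (1:ℝ) else 0) * (if j ∈ Q then (1:ℝ) else 0)
          = (P.card : ℝ) * (Q.card : ℝ) := by
        rw [← Finset.sum_mul_sum]
        congr 1 <;> simp [Finset.sum_ite_mem]
      rw [this, hPcard, hQcard]
    · have : ∑ i, ∑ j, w i * w j * ((if i ∈ P then (1:ℝ) else 0) * (if j ∈ Q then (1:ℝ) else 0))
          = (∑ i, w i * (if i ∈ P then (1:ℝ) else 0)) * (∑ j, w j * (if j ∈ Q then (1:ℝ) else 0)) := by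
        rw [Finset.sum_mul_sum]
        apply Finset.sum_congr rfl; intro i _
        apply Finset.sum_congr rfl; intro j _
        ring
      rw [this]
      have e1 : ∑ i, w i * (if i ∈ P then (1:ℝ) else 0) = ∑ i ∈ P, w i := by
        simp [mul_ite, Finset.sum_ite_mem]
      have e2 : ∑ j, w j * (if j ∈ Q then (1:ℝ) else 0) = ∑ j ∈ Q, w j := by
        simp [mul_ite, Finset.sum_ite_mem]
      rw [e1, e2, hPsum, hQsum]
  · -- upper bound
    rintro v ⟨t, ht01, hrow, hcol, htot, rfl⟩
    by_cases hzero : ∀ i, w i = 0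
    · have : ∑ i, ∑ j, w i * w j * t i j = 0 := by
        apply Finset.sum_eq_zero; intro i _
        apply Finset.sum_eq_zero; intro j _
        rw [hzero i]; ring
      rw [this]
      exact mul_nonneg (Finset.sum_nonneg fun i _ => hw _) hB0
    · push_neg at hzero
      obtain ⟨i₀, hi₀⟩ := hzero
      have hw0 : 0 < w i₀ := lt_of_le_of_ne (hw i₀) (Ne.symm hi₀)
      have hBpos : 0 < B := by
        have hs0 : w i₀ ≤ sortedDesc n w ⟨0, by omega⟩ := by
          have : sortedDesc n w ((descPerm n w).symm i₀) = w i₀ := by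
            rw [← descPerm_apply n w, Equiv.apply_symm_apply]
          rw [← this]
          exact antitone_sortedDesc n w (by simp [Fin.le_def])
        have hmem : (⟨0, by omega⟩ : Fin n) ∈ univ.filter (fun i : Fin n => (i:ℕ) < q) := by
          simp; omega
        calc (0:ℝ) < w i₀ := hw0
          _ ≤ sortedDesc n w ⟨0, by omega⟩ := hs0
          _ ≤ B := Finset.single_le_sum (f := sortedDesc n w) (fun i _ => hw _) hmem
      -- a i = row weighted sums
      set a := fun i => ∑ j, w j * t i j with ha
      have ha0 : ∀ i, 0 ≤ a i := fun i =>
        Finset.sum_nonneg (fun j _ => mul_nonneg (hw j) (ht01 i j).1)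
      have haB : ∀ i, a i ≤ B :=
        fun i => key_lemma n q hq1 hqn w (fun j => t i j) hw (fun j => (ht01 i j).1)
          (fun j => (ht01 i j).2) (hrow i)
      have hsuma : ∑ i, a i ≤ (p : ℝ) * B := by
        have hp0 : (0:ℝ) < p := by exact_mod_cast hp1
        have : ∑ i, a i = ∑ j, w j * ∑ i, t i j := by
          rw [Finset.sum_comm]
          apply Finset.sum_congr rfl
          intro j _
          rw [Finset.mul_sum]
        rw [this]
        have key := key_lemma n q hq1 hqn w (fun j => (∑ i, t i j) / p) hw
          (fun j => div_nonneg (Finset.sum_nonneg fun i _ => (ht01 i j).1) hp0.le)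
          (fun j => (div_le_one hp0).mpr (hcol j))
          (by
            rw [← Finset.sum_div, div_le_iff₀ hp0]
            calc ∑ j, ∑ i, t i j = ∑ i, ∑ j, t i j := Finset.sum_comm
              _ ≤ (p:ℝ) * q := htot
              _ = (q:ℝ) * p := by ring)
        have : ∑ j, w j * ∑ i, t i j = p * ∑ j, w j * ((∑ i, t i j) / p) := by
          rw [Finset.mul_sum]
          apply Finset.sum_congr rfl
          intro j _
          field_simp
        rw [this]
        exact mul_le_mul_of_nonneg_left key hp0.le
      have hval : ∑ i, ∑ j, w i * w j * t i j = B * ∑ i, w i * (a i / B) := by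
        rw [Finset.mul_sum]
        apply Finset.sum_congr rfl
        intro i _
        have h5 : ∑ j, w i * w j * t i j = w i * a i := by
          rw [ha, Finset.mul_sum]
          apply Finset.sum_congr rfl
          intro j _; ring
        rw [h5]
        field_simp
      rw [hval]
      have hkey := key_lemma n p hp1 hpn w (fun i => a i / B) hw
        (fun i => div_nonneg (ha0 i) hB0)
        (fun i => (div_le_one hBpos).mpr (haB i))
        (by
          rw [← Finset.sum_div, div_le_iff₀ hBpos]
          calc ∑ i, a i ≤ (p:ℝ) * B := hsuma)
      calc B * ∑ i, w i * (a i / B) ≤ B * A := mul_le_mul_of_nonneg_left hkey hB0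
        _ = A * B := mul_comm _ _
end
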